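/- arXiv:math/0211442 — 2 statements merged into one kernel-verified Lean document; each statement's English description precedes it below -/
import Mathlib

section
/- Let n ≥ 1 and p ≥ 1. The number of columns of type B and height p over the alphabet 𝔅_n equals Σ_{k=0}^{⌊p/2⌋} binom(2n+1, p−2k). -/
/-!
A column is determined by its set `S` of nonzero letters: it is the sorted arrangement of `S`
together with `p - |S|` copies of `0`. So columns of height `p` correspond to the subsets of the
`2n` nonzero letters with at most `p` elements, of which there are `∑_{j ≤ p} C(2n, j)`;
Pascal's rule `C(2n+1, q) = C(2n, q) + C(2n, q-1)` regroups this sum as `∑_k C(2n+1, p-2k)`.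
-/

/-- The alphabet `𝔅_n = {1 ≺ ⋯ ≺ n ≺ 0 ≺ n̄ ≺ ⋯ ≺ 1̄}` with `2n+1` letters, encoded as
`Fin (2n+1)` with its natural order: the letter `j` (for `1 ≤ j ≤ n`) is `j−1`, the letter
`0` is `n`, and the barred letter `j̄` is `2n+1−j`. -/
abbrev BLetter (n : ℕ) := Fin (2 * n + 1)

/-- A column of type `B` and height `p`: a weakly increasing `p`-tuple of letters of `𝔅_n`
in which only the letter `0` (encoded as `n`) may be repeated (repetitions in a weakly
increasing tuple are detected on adjacent entries). -/
def IsColumnB (n p : ℕ) (C : Fin p → BLetter n) : Prop :=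
  Monotone C ∧ ∀ (j : ℕ) (h : j + 1 < p),
    C ⟨j, by omega⟩ = C ⟨j + 1, h⟩ → (C ⟨j, by omega⟩ : ℕ) = n

open Finset

section CountLeOneOffPoint

variable {α : Type*} [DecidableEq α] {z : α}

theorem Multiset.eq_replicate_count_add_erase {M : Multiset α}
    (hM : ∀ x ≠ z, M.count x ≤ 1) :
    M = Multiset.replicate (M.count z) z + (M.toFinset.erase z).val := by
  ext x
  rw [Multiset.count_add, Multiset.count_replicate,
    Multiset.count_eq_of_nodup (M.toFinset.erase z).nodup]
  simp only [Finset.mem_val, Finset.mem_erase, Multiset.mem_toFinset]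
  by_cases hx : x = z
  · simp [hx]
  · have hle := hM x hx
    simp only [Ne.symm hx, hx, if_false, ne_eq, not_false_eq_true, true_and, zero_add]
    split_ifs with hxM
    · have hpos := Multiset.count_pos.2 hxM
      omega
    · exact Multiset.count_eq_zero.2 hxM

theorem Multiset.eq_of_toFinset_erase_eq {M N : Multiset α} (hM : ∀ x ≠ z, M.count x ≤ 1)
    (hN : ∀ x ≠ z, N.count x ≤ 1) (hcard : M.card = N.card)
    (h : M.toFinset.erase z = N.toFinset.erase z) : M = N := by
  rw [Multiset.eq_replicate_count_add_erase hM,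
    Multiset.eq_replicate_count_add_erase hN] at hcard ⊢
  simp only [Multiset.card_add, Multiset.card_replicate, h] at hcard
  rw [h, Nat.add_right_cancel hcard]

theorem injOn_ne_iff_count_map_le_one {ι : Type*} [Fintype ι] {f : ι → α} :
    Set.InjOn f {i | f i ≠ z} ↔ ∀ x ≠ z, (univ.val.map f).count x ≤ 1 := by
  simp only [Multiset.count_map, ← Finset.filter_val, Finset.card_val, Finset.card_le_one,
    Finset.mem_filter, Finset.mem_univ, true_and]
  constructor
  · rintro hf x hx i rfl j hj
    exact hf hx (show f j ≠ z from hj ▸ hx) hj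
  · intro h i hi j _ hij
    exact h (f i) hi i rfl j hij

end CountLeOneOffPoint

section MonotoneTuples

variable {α : Type*} [LinearOrder α] {p : ℕ}

theorem Monotone.eq_of_map_univ_eq {f g : Fin p → α} (hf : Monotone f) (hg : Monotone g)
    (h : univ.val.map f = univ.val.map g) : f = g := by
  rw [Fin.univ_val_map, Fin.univ_val_map, Multiset.coe_eq_coe] at h
  exact List.ofFn_injective (h.eq_of_sortedLE hf.sortedLE_ofFn hg.sortedLE_ofFn)

theorem Multiset.exists_monotone_map_univ_eq (M : Multiset α) (hM : M.card = p) :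
    ∃ f : Fin p → α, Monotone f ∧ univ.val.map f = M := by
  have hlen : (M.sort (· ≤ ·)).length = p := by rw [Multiset.length_sort, hM]
  obtain ⟨f, hf⟩ : ∃ f : Fin p → α, List.ofFn f = M.sort (· ≤ ·) := by
    subst hlen
    exact ⟨_, List.ofFn_get _⟩
  refine ⟨f, List.sortedLE_ofFn_iff.1 (hf ▸ (Multiset.pairwise_sort M _).sortedLE), ?_⟩
  rw [Fin.univ_val_map, hf, Multiset.sort_eq]

variable {z : α}

theorem Monotone.eq_of_image_erase_eq {f g : Fin p → α} (hf : Monotone f) (hg : Monotone g)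
    (hf' : Set.InjOn f {i | f i ≠ z}) (hg' : Set.InjOn g {i | g i ≠ z})
    (h : (univ.image f).erase z = (univ.image g).erase z) : f = g :=
  hf.eq_of_map_univ_eq hg <| Multiset.eq_of_toFinset_erase_eq
    (injOn_ne_iff_count_map_le_one.1 hf') (injOn_ne_iff_count_map_le_one.1 hg') (by simp) h

theorem exists_monotone_injOn_image_erase_eq {S : Finset α} (hz : z ∉ S) (hS : #S ≤ p) :
    ∃ f : Fin p → α, Monotone f ∧ Set.InjOn f {i | f i ≠ z} ∧
      (univ.image f).erase z = S := by
  have hcard : (Multiset.replicate (p - #S) z + S.val).card = p := by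
    rw [Multiset.card_add, Multiset.card_replicate, card_val]
    omega
  obtain ⟨f, hf, hfM⟩ := Multiset.exists_monotone_map_univ_eq _ hcard
  refine ⟨f, hf, injOn_ne_iff_count_map_le_one.2 fun x hx => ?_, ?_⟩
  · rw [hfM, Multiset.count_add, Multiset.count_replicate, if_neg (Ne.symm hx), zero_add]
    exact Multiset.nodup_iff_count_le_one.1 S.nodup x
  · ext x
    change x ∈ (univ.val.map f).toFinset.erase z ↔ x ∈ S
    rw [hfM]
    simp only [mem_erase, Multiset.mem_toFinset, Multiset.mem_add, Multiset.mem_replicate, mem_val]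
    constructor
    · rintro ⟨hx, ⟨-, rfl⟩ | hxS⟩
      exacts [absurd rfl hx, hxS]
    · exact fun hxS => ⟨fun hxz => hz (hxz ▸ hxS), Or.inr hxS⟩

end MonotoneTuples

theorem card_finset_notMem_card_le {α : Type*} [Fintype α] [DecidableEq α] (z : α) (p : ℕ) :
    Nat.card {S : Finset α // z ∉ S ∧ #S ≤ p} =
      ∑ j ∈ range (p + 1), (Fintype.card α - 1).choose j := by
  rw [Nat.card_eq_fintype_card, Fintype.card_subtype,
    card_eq_sum_card_fiberwise (f := card) (t := range (p + 1))
      fun S hS => mem_range_succ_iff.2 (mem_filter.1 hS).2.2]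
  refine sum_congr rfl fun j hj => ?_
  have hfiber : ({S | (z ∉ S ∧ #S ≤ p) ∧ #S = j} : Finset (Finset α)) =
      powersetCard j (univ.erase z) := by
    ext S
    simp only [mem_filter, mem_univ, true_and, mem_powersetCard, subset_erase, subset_univ]
    constructor
    · rintro ⟨⟨hz, -⟩, rfl⟩
      exact ⟨hz, rfl⟩
    · rintro ⟨hz, rfl⟩
      exact ⟨⟨hz, mem_range_succ_iff.1 hj⟩, rfl⟩
  rw [filter_filter, hfiber, card_powersetCard, card_erase_of_mem (mem_univ z), card_univ]

theorem sum_choose_succ_sub_two_mul (m : ℕ) : ∀ p : ℕ,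
    ∑ k ∈ range (p / 2 + 1), (m + 1).choose (p - 2 * k) = ∑ j ∈ range (p + 1), m.choose j
  | 0 => by simp
  | 1 => by simp [sum_range_succ, add_comm]
  | p + 2 => by
    rw [show (p + 2) / 2 + 1 = p / 2 + 1 + 1 by omega, sum_range_succ']
    simp only [show ∀ k, p + 2 - 2 * (k + 1) = p - 2 * k by omega]
    rw [sum_choose_succ_sub_two_mul m p, sum_range_succ _ (p + 2), sum_range_succ _ (p + 1),
      Nat.sub_zero, Nat.choose_succ_succ]
    ring

def zeroLetter (n : ℕ) : BLetter n := ⟨n, by omega⟩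

theorem isColumnB_iff {n p : ℕ} {C : Fin p → BLetter n} :
    IsColumnB n p C ↔ Monotone C ∧ Set.InjOn C {i | C i ≠ zeroLetter n} := by
  refine and_congr_right fun hC => ⟨fun h => ?_, fun h j hj hCj => ?_⟩
  · have repeat_eq_zero : ∀ i j : Fin p, i < j → C i = C j → C i = zeroLetter n := by
      intro i j hij hCij
      have hi : (i : ℕ) + 1 < p := by omega
      have hnext : C i = C ⟨i + 1, hi⟩ :=
        le_antisymm (hC (Fin.le_def.2 (Nat.le_succ _))) (hCij ▸ hC (Fin.le_def.2 hij))
      exact Fin.ext (h i hi hnext)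
    intro i hi j hj hCij
    by_contra hne
    rcases lt_or_gt_of_ne hne with hlt | hlt
    · exact hi (repeat_eq_zero i j hlt hCij)
    · exact hj (repeat_eq_zero j i hlt hCij.symm)
  · by_contra hne
    have hne' : C ⟨j, by omega⟩ ≠ zeroLetter n := fun h => hne (congrArg Fin.val h)
    have := h hne' (show C ⟨j + 1, hj⟩ ≠ zeroLetter n from hCj ▸ hne') hCj
    simp at this

theorem card_columnB_general (n p : ℕ) :
    Nat.card {C : Fin p → BLetter n // IsColumnB n p C} =
      ∑ k ∈ Finset.range (p / 2 + 1), Nat.choose (2 * n + 1) (p - 2 * k) := by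
  let nonzeroLetters (C : {C : Fin p → BLetter n // IsColumnB n p C}) :
      {S : Finset (BLetter n) // zeroLetter n ∉ S ∧ #S ≤ p} :=
    ⟨(univ.image C.1).erase (zeroLetter n), notMem_erase _ _,
      card_erase_le.trans (card_image_le.trans (card_univ.trans (Fintype.card_fin p)).le)⟩
  have hbij : Function.Bijective nonzeroLetters := by
    refine ⟨fun ⟨C, hC⟩ ⟨D, hD⟩ h => ?_, fun ⟨S, hz, hS⟩ => ?_⟩
    · rw [isColumnB_iff] at hC hD
      exact Subtype.ext (hC.1.eq_of_image_erase_eq hD.1 hC.2 hD.2 (congrArg Subtype.val h))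
    · obtain ⟨C, hmono, hinj, hCS⟩ := exists_monotone_injOn_image_erase_eq hz hS
      exact ⟨⟨C, isColumnB_iff.2 ⟨hmono, hinj⟩⟩, Subtype.ext hCS⟩
  rw [Nat.card_eq_of_bijective nonzeroLetters hbij, card_finset_notMem_card_le,
    Fintype.card_fin, Nat.add_sub_cancel, sum_choose_succ_sub_two_mul]

/-- For `n ≥ 1` and `p ≥ 1`, the number of columns of type `B` and height
`p` over `𝔅_n` equals `∑_{k=0}^{⌊p/2⌋} C(2n+1, p−2k)`. -/
theorem card_columnB (n p : ℕ) (hn : 1 ≤ n) (hp : 1 ≤ p) :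
    Nat.card {C : Fin p → BLetter n // IsColumnB n p C} =
      ∑ k ∈ Finset.range (p / 2 + 1), Nat.choose (2 * n + 1) (p - 2 * k) :=
  card_columnB_general n p
end

section
/- Let n ≥ 2, p ≥ 1 and i ∈ {1,…,n}. For every column C of type D and height p, the word f̃_i(w(C)), if it is not the null symbol, is the reading of a column of type D and height p; likewise, the word ẽ_i(w(C)), if it is not the null symbol, is the reading of a column of type D and height p. -/
/-- The alphabet `𝒟_n = {1 ≺ ⋯ ≺ n−1 ≺ n, n̄ ≺ \overline{n−1} ≺ ⋯ ≺ 1̄}` with `2n`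
letters, encoded as `Fin (2n)`: the letter `j` (`1 ≤ j ≤ n`) is `j−1`, the letter `n̄` is
`n`, and the barred letter `j̄` (`1 ≤ j ≤ n−1`) is `2n−j`.  The letters encoded by `n−1`
(that is `n`) and `n` (that is `n̄`) are incomparable. -/
abbrev DLetter (n : ℕ) := Fin (2 * n)

/-- The strict order of `𝒟_n`: index order except that `n` and `n̄` (indices `n−1` and
`n`) are incomparable. -/
def dLT (n : ℕ) (a b : DLetter n) : Prop :=
  (a : ℕ) < (b : ℕ) ∧ ¬((a : ℕ) = n - 1 ∧ (b : ℕ) = n)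

/-- The Kashiwara operator `f̃_i` on a single letter of `𝒟_n`, following the crystal
graph of the vector representation of type `D_n`: for `i ≤ n−1`, `i ↦ i+1` and
`\overline{i+1} ↦ ī`; for `i = n`, `n−1 ↦ n̄` and `n ↦ \overline{n−1}`; all other letters
are sent to the null symbol `none`. -/
def fLetterD (n i : ℕ) (x : DLetter n) : Option (DLetter n) :=
  if i < n then
    if h : ((x : ℕ) + 1 = i ∨ (x : ℕ) + 1 + i = 2 * n) ∧ (x : ℕ) + 1 < 2 * n then
      some ⟨(x : ℕ) + 1, h.2⟩
    else none
  else if i = n then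
    if h1 : (x : ℕ) + 2 = n ∧ n < 2 * n then some ⟨n, h1.2⟩
    else if h2 : (x : ℕ) + 1 = n ∧ n + 1 < 2 * n then some ⟨n + 1, h2.2⟩
    else none
  else none

/-- The Kashiwara operator `ẽ_i` on a single letter of `𝒟_n`: the reverse of `f̃_i`. -/
def eLetterD (n i : ℕ) (y : DLetter n) : Option (DLetter n) :=
  if i < n then
    if ((y : ℕ) = i ∨ (y : ℕ) + i = 2 * n) ∧ 1 ≤ (y : ℕ) then
      some ⟨(y : ℕ) - 1, lt_of_le_of_lt (Nat.sub_le _ _) y.isLt⟩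
    else none
  else if i = n then
    if h1 : (y : ℕ) = n ∧ n - 2 < 2 * n ∧ 2 ≤ n then some ⟨n - 2, h1.2.1⟩
    else if h2 : (y : ℕ) = n + 1 ∧ n - 1 < 2 * n ∧ 1 ≤ n then some ⟨n - 1, h2.2.1⟩
    else none
  else none

/-- Iteration of a partially defined operator (`none` is the null symbol, and any
expression involving the null symbol is null). -/
def oiter {α : Type*} (g : α → Option α) : ℕ → α → Option α
  | 0, a => some a
  | m + 1, a => (g a).bind (oiter g m)

/-- `φ` of a partially defined operator at a point: the maximal number of times the
operator can be applied without producing the null symbol. -/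
noncomputable def phiOf {α : Type*} (g : α → Option α) (a : α) : ℕ :=
  sSup {m | oiter g m a ≠ none}

/-- `ε_i` of a single letter: the maximal power of `ẽ_i` not giving the null symbol. -/
noncomputable def epsLetterD (n i : ℕ) (x : DLetter n) : ℕ :=
  phiOf (eLetterD n i) x

/-- One step of the recursive (tensor-rule) definition of `f̃_i` on words.  Words are
stored in *reversed* order, so that a word `w = u·v` (`v` its last letter) is the list
`v :: uᵣ` with `uᵣ` the reversal of `u`; `prev` is `f̃_i` (in reversed encoding) on the
strictly shorter word `u`.  The rule: `f̃_i(u ⊗ v) = f̃_i(u) ⊗ v` if `φ_i(u) > ε_i(v)`,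
and `u ⊗ f̃_i(v)` otherwise. -/
noncomputable def fStepD (n i : ℕ) (prev : List (DLetter n) → Option (List (DLetter n))) :
    List (DLetter n) → Option (List (DLetter n))
  | [] => none
  | [x] => (fLetterD n i x).map (fun y => [y])
  | v :: u =>
      if phiOf prev u > epsLetterD n i v then (prev u).map (fun u' => v :: u')
      else (fLetterD n i v).map (fun y => y :: u)

/-- Fuel-indexed `f̃_i` on reversed words (the fuel bounds the length of the word). -/
noncomputable def fAuxD (n i : ℕ) : ℕ → List (DLetter n) → Option (List (DLetter n))
  | 0 => fun w => match w with
      | [x] => (fLetterD n i x).map (fun y => [y])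
      | _ => none
  | m + 1 => fStepD n i (fAuxD n i m)

/-- One step of the recursive (tensor-rule) definition of `ẽ_i` on reversed words:
`ẽ_i(u ⊗ v) = u ⊗ ẽ_i(v)` if `φ_i(u) < ε_i(v)`, and `ẽ_i(u) ⊗ v` otherwise. -/
noncomputable def eStepD (n i : ℕ)
    (prevF prevE : List (DLetter n) → Option (List (DLetter n))) :
    List (DLetter n) → Option (List (DLetter n))
  | [] => none
  | [x] => (eLetterD n i x).map (fun y => [y])
  | v :: u =>
      if phiOf prevF u < epsLetterD n i v then (eLetterD n i v).map (fun y => y :: u)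
      else (prevE u).map (fun u' => v :: u')

/-- Fuel-indexed `ẽ_i` on reversed words. -/
noncomputable def eAuxD (n i : ℕ) : ℕ → List (DLetter n) → Option (List (DLetter n))
  | 0 => fun w => match w with
      | [x] => (eLetterD n i x).map (fun y => [y])
      | _ => none
  | m + 1 => eStepD n i (fAuxD n i m) (eAuxD n i m)

/-- The Kashiwara operator `f̃_i` on words over `𝒟_n` (lists read left to right),
the value `none` being the null symbol. -/
noncomputable def fWordD (n i : ℕ) (w : List (DLetter n)) : Option (List (DLetter n)) :=
  (fAuxD n i w.length w.reverse).map List.reverse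

/-- The Kashiwara operator `ẽ_i` on words over `𝒟_n`. -/
noncomputable def eWordD (n i : ℕ) (w : List (DLetter n)) : Option (List (DLetter n)) :=
  (eAuxD n i w.length w.reverse).map List.reverse

/-- The reading of a column of type `D`: a word `x₁⋯x_p` over `𝒟_n` with `x_{j+1}` never
less than or equal to `x_j` (for the partial order of `𝒟_n`). -/
def IsColWordD (n : ℕ) (w : List (DLetter n)) : Prop :=
  List.Chain' (fun a b => ¬(b = a ∨ dLT n b a)) w

/-! On reversed words the tensor rule is a structural recursion, and a column is a chain for
`NotLeD`. Each of `f̃_i`, `ẽ_i` moves a single letter along an `i`-arrow, so only the column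
conditions with its two neighbours need rechecking; the shape of the arrows settles all cases
but two, where the tensor rule intervenes. If `f̃_i` raises a letter `z` directly above a letter
`x`, it was passed on past `x`, so `φ_i` of the word ending at `z` exceeds `ε_i(x)`; as this
`φ_i` equals `1` when `f̃_i` acts on its last letter, `ε_i(x) = 0`. If `ẽ_i` lowers `x`, then
`φ_i` of the word ending at the letter `z` above it is less than `ε_i(x) ≤ 1`, so `f̃_i(z)` is
null. These `φ_i` are finite because `f̃_i` strictly raises the sum of the letter indices. -/

section PartialIteration

variable {α : Type*} {g : α → Option α} {a b : α}

lemma oiter_succ_of_eq_some (h : g a = some b) (k : ℕ) :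
    oiter g (k + 1) a = oiter g k b := by
  simp [oiter, h]

lemma oiter_succ_of_eq_none (h : g a = none) (k : ℕ) : oiter g (k + 1) a = none := by
  simp [oiter, h]

lemma bddAbove_oiter_ne_none (μ : α → ℕ) (hμ : ∀ a b, g a = some b → μ b < μ a) (a : α) :
    BddAbove {k | oiter g k a ≠ none} := by
  have hdrop : ∀ k a c, oiter g k a = some c → μ c + k ≤ μ a := by
    intro k
    induction k with
    | zero => intro a c h; cases h; rfl
    | succ k ih =>
      intro a c h
      cases hga : g a with
      | none => simp [oiter_succ_of_eq_none hga] at h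
      | some b =>
        have := ih b c (by rwa [← oiter_succ_of_eq_some hga])
        have := hμ a b hga
        omega
  refine ⟨μ a, fun k hk => ?_⟩
  obtain ⟨c, hc⟩ := Option.ne_none_iff_exists'.mp hk
  have := hdrop k a c hc
  omega

lemma phiOf_eq_zero (h : g a = none) : phiOf g a = 0 := by
  have hset : {k | oiter g k a ≠ none} = {0} := by
    ext k
    cases k with
    | zero => simp [oiter]
    | succ k => simp [oiter_succ_of_eq_none h]
  rw [phiOf, hset, csSup_singleton]

lemma phiOf_eq_succ (h : g a = some b) (hb : BddAbove {k | oiter g k b ≠ none}) :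
    phiOf g a = phiOf g b + 1 := by
  have hne : ({k | oiter g k b ≠ none} : Set ℕ).Nonempty := ⟨0, by simp [oiter]⟩
  have hub : ∀ k ∈ {k | oiter g k a ≠ none}, k ≤ phiOf g b + 1 := by
    rintro (_ | k) hk
    · omega
    · rw [Set.mem_ofPred_eq, oiter_succ_of_eq_some h] at hk
      exact Nat.succ_le_succ (le_csSup hb hk)
  refine le_antisymm (csSup_le ⟨0, by simp [oiter]⟩ hub) (le_csSup ⟨_, hub⟩ ?_)
  rw [Set.mem_ofPred_eq, oiter_succ_of_eq_some h]
  exact Nat.sSup_mem hne hb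

lemma phiOf_eq_zero_iff (ha : BddAbove {k | oiter g k a ≠ none}) :
    phiOf g a = 0 ↔ g a = none := by
  refine ⟨fun h => ?_, phiOf_eq_zero⟩
  by_contra hne
  obtain ⟨b, hb⟩ := Option.ne_none_iff_exists'.mp hne
  have : 1 ≤ phiOf g a := le_csSup ha (by simp [oiter, hb])
  omega

end PartialIteration

section Letters

variable {n i : ℕ}

/-- The `i`-arrow `x → y` of the crystal graph of the vector representation. -/
def IsArrowD (n i : ℕ) (x y : DLetter n) : Prop :=
  (i < n ∧ ((x : ℕ) + 1 = i ∨ (x : ℕ) + 1 + i = 2 * n) ∧ (y : ℕ) = x + 1) ∨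
    (i = n ∧ (((x : ℕ) + 2 = n ∧ (y : ℕ) = n) ∨ ((x : ℕ) + 1 = n ∧ (y : ℕ) = n + 1)))

lemma isArrowD_of_fLetterD_eq_some {x y : DLetter n} (h : fLetterD n i x = some y) :
    IsArrowD n i x y := by
  unfold fLetterD at h
  unfold IsArrowD
  split_ifs at h <;> grind [Fin.ext_iff]

lemma isArrowD_of_eLetterD_eq_some {x y : DLetter n} (h : eLetterD n i y = some x) :
    IsArrowD n i x y := by
  unfold eLetterD at h
  unfold IsArrowD
  split_ifs at h <;> grind [Fin.ext_iff]

lemma IsArrowD.val_lt {x y : DLetter n} (h : IsArrowD n i x y) : (x : ℕ) < y := by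
  unfold IsArrowD at h
  omega

lemma fLetterD_eq_none_iff (hn : 2 ≤ n) (hi : 1 ≤ i) {x : DLetter n} :
    fLetterD n i x = none ↔
      ¬((i < n ∧ ((x : ℕ) + 1 = i ∨ (x : ℕ) + 1 + i = 2 * n)) ∨
        (i = n ∧ ((x : ℕ) + 2 = n ∨ (x : ℕ) + 1 = n))) := by
  have := x.isLt
  unfold fLetterD
  split_ifs <;> simp_all <;> grind

lemma eLetterD_eq_none_iff (hn : 2 ≤ n) (hi : 1 ≤ i) {y : DLetter n} :
    eLetterD n i y = none ↔
      ¬((i < n ∧ ((y : ℕ) = i ∨ (y : ℕ) + i = 2 * n)) ∨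
        (i = n ∧ ((y : ℕ) = n ∨ (y : ℕ) = n + 1))) := by
  have := y.isLt
  unfold eLetterD
  split_ifs <;> simp_all <;> grind

lemma fLetterD_eq_none_of_fLetterD_eq_some (hn : 2 ≤ n) (hi : 1 ≤ i) {x y : DLetter n}
    (h : fLetterD n i x = some y) : fLetterD n i y = none := by
  have := isArrowD_of_fLetterD_eq_some h
  unfold IsArrowD at this
  rw [fLetterD_eq_none_iff hn hi]
  omega

lemma eLetterD_eq_none_of_fLetterD_eq_some (hn : 2 ≤ n) (hi : 1 ≤ i) {x y : DLetter n}
    (h : fLetterD n i x = some y) : eLetterD n i x = none := by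
  have := isArrowD_of_fLetterD_eq_some h
  unfold IsArrowD at this
  rw [eLetterD_eq_none_iff hn hi]
  omega

lemma eLetterD_eq_none_of_eLetterD_eq_some (hn : 2 ≤ n) (hi : 1 ≤ i) {x y : DLetter n}
    (h : eLetterD n i y = some x) : eLetterD n i x = none := by
  have := isArrowD_of_eLetterD_eq_some h
  unfold IsArrowD at this
  rw [eLetterD_eq_none_iff hn hi]
  omega

lemma bddAbove_oiter_eLetterD (x : DLetter n) :
    BddAbove {k | oiter (eLetterD n i) k x ≠ none} :=
  bddAbove_oiter_ne_none Fin.val (fun _ _ h => (isArrowD_of_eLetterD_eq_some h).val_lt) x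

lemma epsLetterD_eq_zero_iff {x : DLetter n} :
    epsLetterD n i x = 0 ↔ eLetterD n i x = none :=
  phiOf_eq_zero_iff (bddAbove_oiter_eLetterD x)

lemma epsLetterD_le_one (hn : 2 ≤ n) (hi : 1 ≤ i) (x : DLetter n) : epsLetterD n i x ≤ 1 := by
  cases h : eLetterD n i x with
  | none => simp [epsLetterD_eq_zero_iff.mpr h]
  | some y =>
    rw [epsLetterD, phiOf_eq_succ h (bddAbove_oiter_eLetterD y),
      phiOf_eq_zero (eLetterD_eq_none_of_eLetterD_eq_some hn hi h)]

end Letters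

section Words

variable {n i : ℕ}

lemma fAuxD_singleton (m : ℕ) (x : DLetter n) :
    fAuxD n i m [x] = (fLetterD n i x).map fun y => [y] := by
  cases m <;> rfl

lemma length_eq_and_sum_rev_lt_of_fAuxD_eq_some :
    ∀ (l : List (DLetter n)) (m : ℕ) (l' : List (DLetter n)), fAuxD n i m l = some l' →
      l'.length = l.length ∧
        (l'.map fun x => (x.rev : ℕ)).sum < (l.map fun x => (x.rev : ℕ)).sum
  | [], m, _, h => by cases m <;> cases h
  | [x], m, l', h => by
    rw [fAuxD_singleton, Option.map_eq_some_iff] at h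
    obtain ⟨y, hy, rfl⟩ := h
    have := (isArrowD_of_fLetterD_eq_some hy).val_lt
    refine ⟨rfl, ?_⟩
    simp only [List.map_cons, List.map_nil, List.sum_singleton, Fin.val_rev]
    omega
  | _ :: _ :: _, 0, _, h => by cases h
  | x :: z :: u, m + 1, l', h => by
    change (if _ then _ else _) = _ at h
    split_ifs at h
    · obtain ⟨u', hu, rfl⟩ := Option.map_eq_some_iff.mp h
      obtain ⟨hlen, hsum⟩ := length_eq_and_sum_rev_lt_of_fAuxD_eq_some (z :: u) m u' hu
      refine ⟨by simp [hlen], ?_⟩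
      simp only [List.map_cons, List.sum_cons] at hsum ⊢
      omega
    · obtain ⟨y, hy, rfl⟩ := Option.map_eq_some_iff.mp h
      have := (isArrowD_of_fLetterD_eq_some hy).val_lt
      refine ⟨rfl, ?_⟩
      simp only [List.map_cons, List.sum_cons, Fin.val_rev]
      omega

lemma bddAbove_oiter_fAuxD (m : ℕ) (l : List (DLetter n)) :
    BddAbove {k | oiter (fAuxD n i m) k l ≠ none} :=
  bddAbove_oiter_ne_none _
    (fun _ _ h => (length_eq_and_sum_rev_lt_of_fAuxD_eq_some _ _ _ h).2) l

/-- `φ_i` of the word whose reversal is `l`. -/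
noncomputable def phiWordD (n i : ℕ) (l : List (DLetter n)) : ℕ :=
  phiOf (fAuxD n i l.length) l

lemma phiWordD_nil : phiWordD n i [] = 0 :=
  phiOf_eq_zero rfl

lemma phiWordD_eq_succ {l l' : List (DLetter n)} (h : fAuxD n i l.length l = some l') :
    phiWordD n i l = phiWordD n i l' + 1 := by
  rw [phiWordD, phiOf_eq_succ h (bddAbove_oiter_fAuxD _ _), phiWordD,
    (length_eq_and_sum_rev_lt_of_fAuxD_eq_some _ _ _ h).1]

lemma phiWordD_eq_zero_iff {l : List (DLetter n)} :
    phiWordD n i l = 0 ↔ fAuxD n i l.length l = none :=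
  phiOf_eq_zero_iff (bddAbove_oiter_fAuxD _ _)

lemma fAuxD_cons (x : DLetter n) (u : List (DLetter n)) :
    fAuxD n i (u.length + 1) (x :: u) =
      if epsLetterD n i x < phiWordD n i u then (fAuxD n i u.length u).map (x :: ·)
      else (fLetterD n i x).map (· :: u) := by
  cases u with
  | nil => simp [phiWordD_nil, fAuxD_singleton]
  | cons => rfl

lemma eAuxD_cons (x : DLetter n) (u : List (DLetter n)) :
    eAuxD n i (u.length + 1) (x :: u) =
      if phiWordD n i u < epsLetterD n i x then (eLetterD n i x).map (· :: u)
      else (eAuxD n i u.length u).map (x :: ·) := by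
  cases u with
  | nil =>
    change (eLetterD n i x).map (fun y => [y]) =
      if phiWordD n i [] < epsLetterD n i x then (eLetterD n i x).map (· :: []) else none
    rw [phiWordD_nil]
    split_ifs with hpos
    · rfl
    · rw [epsLetterD_eq_zero_iff.mp (by omega), Option.map_none]
  | cons => rfl

lemma one_le_phiWordD_cons {x y : DLetter n} (u : List (DLetter n))
    (h : fLetterD n i x = some y) : 1 ≤ phiWordD n i (x :: u) := by
  rw [Nat.one_le_iff_ne_zero, Ne, phiWordD_eq_zero_iff, List.length_cons, fAuxD_cons]
  split_ifs with hlt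
  · rw [Option.map_eq_none_iff, ← phiWordD_eq_zero_iff]
    omega
  · simp [h]

lemma phiWordD_cons_eq_one (hn : 2 ≤ n) (hi : 1 ≤ i) {x y : DLetter n} {u : List (DLetter n)}
    (hy : fLetterD n i x = some y) (hu : phiWordD n i u ≤ epsLetterD n i x) :
    phiWordD n i (x :: u) = 1 := by
  have hε : epsLetterD n i x = 0 :=
    epsLetterD_eq_zero_iff.mpr (eLetterD_eq_none_of_fLetterD_eq_some hn hi hy)
  have hstep : fAuxD n i (x :: u).length (x :: u) = some (y :: u) := by
    rw [List.length_cons, fAuxD_cons, if_neg (by omega), hy]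
    rfl
  rw [phiWordD_eq_succ hstep, Nat.add_eq_right, phiWordD_eq_zero_iff, List.length_cons,
    fAuxD_cons, if_neg (by omega), fLetterD_eq_none_of_fLetterD_eq_some hn hi hy]
  rfl

lemma length_eq_of_eAuxD_eq_some :
    ∀ (l l' : List (DLetter n)), eAuxD n i l.length l = some l' → l'.length = l.length
  | [], _, h => by cases h
  | x :: u, l', h => by
    rw [List.length_cons, eAuxD_cons] at h
    split_ifs at h
    · obtain ⟨y, -, rfl⟩ := Option.map_eq_some_iff.mp h
      rfl
    · obtain ⟨u', hu, rfl⟩ := Option.map_eq_some_iff.mp h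
      simp [length_eq_of_eAuxD_eq_some u u' hu]

end Words

section Columns

variable {n i : ℕ}

def NotLeD (n : ℕ) (a b : DLetter n) : Prop :=
  ¬(a = b ∨ dLT n a b)

lemma isColWordD_reverse_iff {l : List (DLetter n)} :
    IsColWordD n l.reverse ↔ l.IsChain (NotLeD n) :=
  List.isChain_reverse

lemma notLeD_iff {a b : DLetter n} :
    NotLeD n a b ↔ (b : ℕ) < a ∨ ((a : ℕ) = n - 1 ∧ (b : ℕ) = n) := by
  have := a.isLt
  rw [NotLeD, dLT, Fin.ext_iff]
  omega

variable {x z x' z' : DLetter n}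

lemma NotLeD.fLetterD_left (h : NotLeD n x z) (hx : fLetterD n i x = some x') :
    NotLeD n x' z := by
  have := isArrowD_of_fLetterD_eq_some hx
  rw [notLeD_iff] at h ⊢
  unfold IsArrowD at this
  omega

lemma NotLeD.fLetterD_right (hn : 2 ≤ n) (hi : 1 ≤ i) (h : NotLeD n x z)
    (hx : eLetterD n i x = none) (hz : fLetterD n i z = some z') : NotLeD n x z' := by
  have := isArrowD_of_fLetterD_eq_some hz
  rw [notLeD_iff] at h ⊢
  rw [eLetterD_eq_none_iff hn hi] at hx
  unfold IsArrowD at this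
  omega

lemma NotLeD.eLetterD_left (hn : 2 ≤ n) (hi : 1 ≤ i) (h : NotLeD n x z)
    (hz : fLetterD n i z = none) (hx : eLetterD n i x = some x') : NotLeD n x' z := by
  have := isArrowD_of_eLetterD_eq_some hx
  rw [notLeD_iff] at h ⊢
  rw [fLetterD_eq_none_iff hn hi] at hz
  unfold IsArrowD at this
  omega

lemma NotLeD.eLetterD_right (h : NotLeD n x z) (hz : eLetterD n i z = some z') :
    NotLeD n x z' := by
  have := isArrowD_of_eLetterD_eq_some hz
  rw [notLeD_iff] at h ⊢
  unfold IsArrowD at this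
  omega

theorem isChain_of_fAuxD_eq_some (hn : 2 ≤ n) (hi : 1 ≤ i) :
    ∀ l l' : List (DLetter n), fAuxD n i l.length l = some l' → l.IsChain (NotLeD n) →
      l'.IsChain (NotLeD n) ∧ ∀ x, epsLetterD n i x < phiWordD n i l →
        (x :: l).IsChain (NotLeD n) → (x :: l').IsChain (NotLeD n)
  | [], _, h, _ => by cases h
  | x :: u, l', h, hc => by
    rw [List.length_cons, fAuxD_cons] at h
    split_ifs at h with hlt
    · obtain ⟨u', hu, rfl⟩ := Option.map_eq_some_iff.mp h
      have ih := isChain_of_fAuxD_eq_some hn hi u u' hu hc.tail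
      have hc' : (x :: u').IsChain (NotLeD n) := ih.2 x hlt hc
      exact ⟨hc', fun _ _ hc₀ => .cons_cons hc₀.rel hc'⟩
    · obtain ⟨y, hy, rfl⟩ := Option.map_eq_some_iff.mp h
      have hc' : (y :: u).IsChain (NotLeD n) := hc.imp_head fun h => h.fLetterD_left hy
      refine ⟨hc', fun x₀ hx₀ hc₀ => .cons_cons ?_ hc'⟩
      -- `f̃_i` acted on the last letter `x`, so `φ_i = 1`, and the guard gives `ε_i(x₀) = 0`
      rw [phiWordD_cons_eq_one hn hi hy (not_lt.mp hlt), Nat.lt_one_iff,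
        epsLetterD_eq_zero_iff] at hx₀
      exact hc₀.rel.fLetterD_right hn hi hx₀ hy

theorem isChain_of_eAuxD_eq_some (hn : 2 ≤ n) (hi : 1 ≤ i) :
    ∀ l l' : List (DLetter n), eAuxD n i l.length l = some l' → l.IsChain (NotLeD n) →
      l'.IsChain (NotLeD n) ∧ ∀ x, (x :: l).IsChain (NotLeD n) → (x :: l').IsChain (NotLeD n)
  | [], _, h, _ => by cases h
  | x :: u, l', h, hc => by
    rw [List.length_cons, eAuxD_cons] at h
    split_ifs at h with hlt
    · obtain ⟨y, hy, rfl⟩ := Option.map_eq_some_iff.mp h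
      have hc' : (y :: u).IsChain (NotLeD n) := by
        cases u with
        | nil => exact .singleton y
        | cons z u =>
          have hz : fLetterD n i z = none := by
            by_contra hz
            obtain ⟨z', hz'⟩ := Option.ne_none_iff_exists'.mp hz
            have := one_le_phiWordD_cons u hz'
            have := epsLetterD_le_one hn hi x
            omega
          exact .cons_cons (hc.rel.eLetterD_left hn hi hz hy) hc.tail
      exact ⟨hc', fun _ hc₀ => .cons_cons (hc₀.rel.eLetterD_right hy) hc'⟩
    · obtain ⟨u', hu, rfl⟩ := Option.map_eq_some_iff.mp h
      have ih := isChain_of_eAuxD_eq_some hn hi u u' hu hc.tail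
      have hc' : (x :: u').IsChain (NotLeD n) := ih.2 x hc
      exact ⟨hc', fun _ hc₀ => .cons_cons hc₀.rel hc'⟩

end Columns

theorem kashiwara_preserves_columnsD_general (n p i : ℕ) (hn : 2 ≤ n)
    (hi : 1 ≤ i) (w : List (DLetter n))
    (hw : IsColWordD n w) (hlen : w.length = p) :
    (∀ w', fWordD n i w = some w' → IsColWordD n w' ∧ w'.length = p) ∧
    (∀ w', eWordD n i w = some w' → IsColWordD n w' ∧ w'.length = p) := by
  have hrev : w.reverse.IsChain (NotLeD n) := by
    rwa [← isColWordD_reverse_iff, List.reverse_reverse]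
  constructor
  · intro w' hw'
    obtain ⟨r, hr, rfl⟩ := Option.map_eq_some_iff.mp hw'
    rw [← List.length_reverse] at hr
    refine ⟨isColWordD_reverse_iff.mpr (isChain_of_fAuxD_eq_some hn hi _ _ hr hrev).1, ?_⟩
    rw [List.length_reverse, (length_eq_and_sum_rev_lt_of_fAuxD_eq_some _ _ _ hr).1,
      List.length_reverse, hlen]
  · intro w' hw'
    obtain ⟨r, hr, rfl⟩ := Option.map_eq_some_iff.mp hw'
    rw [← List.length_reverse] at hr
    refine ⟨isColWordD_reverse_iff.mpr (isChain_of_eAuxD_eq_some hn hi _ _ hr hrev).1, ?_⟩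
    rw [List.length_reverse, length_eq_of_eAuxD_eq_some _ _ hr, List.length_reverse, hlen]

/-- For `n ≥ 2`, `p ≥ 1` and `1 ≤ i ≤ n`, if `w` is the reading of a
column of type `D` and height `p`, then `f̃_i(w)`, if not null, is again the reading of a
column of type `D` and height `p`, and likewise for `ẽ_i(w)`. -/
theorem kashiwara_preserves_columnsD (n p i : ℕ) (hn : 2 ≤ n) (hp : 1 ≤ p)
    (hi : 1 ≤ i) (hin : i ≤ n) (w : List (DLetter n))
    (hw : IsColWordD n w) (hlen : w.length = p) :
    (∀ w', fWordD n i w = some w' → IsColWordD n w' ∧ w'.length = p) ∧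
    (∀ w', eWordD n i w = some w' → IsColWordD n w' ∧ w'.length = p) :=
  kashiwara_preserves_columnsD_general n p i hn hi w hw hlen
end
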